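/- The Airy function satisfies the differential equation \(\mathrm{Ai}''(x) = x\,\mathrm{Ai}(x)\) for all real x, where \(\mathrm{Ai}(x) = \frac{1}{\pi}\int_0^\infty \cos(t^3/3 + xt)\, dt\). -/

import Mathlib

/-!
Write `φ(x, t) = t³/3 + x t`, `C_R(x) = ∫₀^R cos φ` and `S_R(x) = ∫₀^R t sin φ`. Then
`C_R' = -S_R`, and since `∂ₜ sin φ = (t² + x) cos φ`, `S_R' = ∫₀^R t² cos φ = sin φ(x, R) - x C_R`.
The boundary term `sin φ(x, R)` does not vanish as `R → ∞`, so the truncations are regularized: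
`C_R - sin φ(x, R) / R²` and `S_R + cos φ(x, R) / R` have derivatives `-(S_R + cos φ(x, R) / R)` and
`-x C_R`, while the corrections tend to `0` uniformly. One integration by parts against the
decreasing weights `1 / (t² + x)` and `t / (t² + x)` bounds the tails `∫_R^S` of both integrals by
`4 / R²` and `4 / R`, locally uniformly in `x`. Hence `C_R → π Ai` and `S_R → g` locally uniformly,
and the theorem on derivatives of locally uniform limits, applied twice, gives `(π Ai)' = -g` and
`g' = -x π Ai`.
-/

open Real Filter Topology Set MeasureTheory intervalIntegral
open scoped Interval

theorem hasDerivAt_intervalIntegral_of_continuous_deriv {E : Type*} [NormedAddCommGroup E]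
    [NormedSpace ℝ E] {F F' : ℝ → ℝ → E} (a b x₀ : ℝ) (hF : ∀ x, Continuous (F x))
    (hF' : Continuous (Function.uncurry F')) (hdiff : ∀ x t, HasDerivAt (F · t) (F' x t) x) :
    HasDerivAt (fun x => ∫ t in a..b, F x t) (∫ t in a..b, F' x₀ t) x₀ := by
  obtain ⟨C, hC⟩ := ((isCompact_closedBall x₀ 1).prod isCompact_uIcc).exists_bound_of_continuousOn
    (hF'.continuousOn (s := Metric.closedBall x₀ 1 ×ˢ [[a, b]]))
  refine (hasDerivAt_integral_of_dominated_loc_of_deriv_le (bound := fun _ => C)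
    (Metric.closedBall_mem_nhds x₀ one_pos) (.of_forall fun x => (hF x).aestronglyMeasurable)
    ((hF x₀).intervalIntegrable a b)
    (hF'.comp (Continuous.prodMk_right x₀)).aestronglyMeasurable ?_ intervalIntegrable_const
    (.of_forall fun t _ x _ => hdiff x t)).2
  exact .of_forall fun t ht x hx => hC (x, t) ⟨hx, uIoc_subset_uIcc ht⟩

theorem abs_integral_mul_deriv_le_of_antitone {u u' v v' : ℝ → ℝ} {a b : ℝ} (hab : a ≤ b)
    (hu : ∀ t ∈ Icc a b, HasDerivAt u (u' t) t) (hv : ∀ t ∈ Icc a b, HasDerivAt v (v' t) t)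
    (hu'i : IntervalIntegrable u' volume a b) (hv'i : IntervalIntegrable v' volume a b)
    (hu' : ∀ t ∈ Icc a b, u' t ≤ 0) (hub : 0 ≤ u b) (hv_le : ∀ t ∈ Icc a b, |v t| ≤ 1) :
    |∫ t in a..b, u t * v' t| ≤ 2 * u a := by
  rw [← uIcc_of_le hab] at hu hv
  have hrem : |∫ t in a..b, u' t * v t| ≤ u a - u b := by
    have hint : ∫ t in a..b, -u' t = u a - u b := by
      rw [intervalIntegral.integral_neg, integral_eq_sub_of_hasDerivAt hu hu'i, neg_sub]
    rw [← hint, ← Real.norm_eq_abs]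
    refine norm_integral_le_of_norm_le hab (.of_forall fun t ht => ?_) hu'i.neg
    have ht : t ∈ Icc a b := Ioc_subset_Icc_self ht
    rw [norm_mul, Real.norm_eq_abs, Real.norm_eq_abs, abs_of_nonpos (hu' t ht)]
    exact mul_le_of_le_one_right (neg_nonneg.2 (hu' t ht)) (hv_le t ht)
  have hua : u b ≤ u a := by linarith [(abs_nonneg _).trans hrem]
  have hva := hv_le a (left_mem_Icc.2 hab)
  have hvb := hv_le b (right_mem_Icc.2 hab)
  rw [integral_mul_deriv_eq_deriv_mul hu hv hu'i hv'i]
  calc |u b * v b - u a * v a - ∫ t in a..b, u' t * v t|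
      ≤ |u b| * |v b| + |u a| * |v a| + |∫ t in a..b, u' t * v t| := by
        rw [← abs_mul, ← abs_mul]
        exact (abs_sub _ _).trans (add_le_add_left (abs_sub _ _) _)
    _ ≤ u b * 1 + u a * 1 + (u a - u b) := by
        have hua' := hub.trans hua
        rw [abs_of_nonneg hub, abs_of_nonneg hua']; gcongr
    _ = 2 * u a := by ring

section ImproperIntegral

variable {E : Type*} [NormedAddCommGroup E] [NormedSpace ℝ E] {f : ℝ → E} {a : ℝ}

theorem cauchySeq_intervalIntegral_of_tail_le (hf : ∀ b c, IntervalIntegrable f volume b c)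
    {ε : ℝ → ℝ} (hε : Tendsto ε atTop (𝓝 0))
    (htail : ∀ᶠ R in atTop, ∀ S ≥ R, ‖∫ t in R..S, f t‖ ≤ ε R) :
    CauchySeq fun R => ∫ t in a..R, f t := by
  refine Metric.cauchySeq_iff'.2 fun δ hδ => ?_
  obtain ⟨N, hN, hεN⟩ := (htail.and (hε.eventually (eventually_lt_nhds hδ))).exists
  refine ⟨N, fun S hS => ?_⟩
  rw [dist_eq_norm, integral_interval_sub_left (hf a S) (hf a N)]
  exact (hN S hS).trans_lt hεN

theorem norm_sub_intervalIntegral_le_of_tail_le (hf : ∀ b c, IntervalIntegrable f volume b c)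
    {L : E} (hL : Tendsto (fun S => ∫ t in a..S, f t) atTop (𝓝 L)) {R C : ℝ}
    (htail : ∀ S ≥ R, ‖∫ t in R..S, f t‖ ≤ C) :
    ‖L - ∫ t in a..R, f t‖ ≤ C := by
  refine le_of_tendsto (hL.sub_const _).norm (eventually_atTop.2 ⟨R, fun S hS => ?_⟩)
  rw [integral_interval_sub_left (hf a S) (hf a R)]
  exact htail S hS

end ImproperIntegral

theorem tendstoLocallyUniformly_intervalIntegral_of_tail_le {α E : Type*} [TopologicalSpace α]
    [NormedAddCommGroup E] [NormedSpace ℝ E] [CompleteSpace E] {f : α → ℝ → E} (a : ℝ)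
    (hf : ∀ x b c, IntervalIntegrable (f x) volume b c) {ε : ℝ → ℝ} (hε : Tendsto ε atTop (𝓝 0))
    (htail : ∀ x₀, ∃ U ∈ 𝓝 x₀, ∀ᶠ R in atTop, ∀ x ∈ U, ∀ S ≥ R, ‖∫ t in R..S, f x t‖ ≤ ε R) :
    TendstoLocallyUniformly (fun R x => ∫ t in a..R, f x t)
      (fun x => limUnder atTop fun R => ∫ t in a..R, f x t) atTop := by
  refine tendstoLocallyUniformly_of_forall_exists_nhds fun x₀ => ?_
  obtain ⟨U, hU, hUtail⟩ := htail x₀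
  refine ⟨U, hU, Metric.tendstoUniformlyOn_iff.2 fun δ hδ => ?_⟩
  filter_upwards [hUtail, hε.eventually (eventually_lt_nhds hδ)] with R hR hεR x hx
  have hlim := (cauchySeq_intervalIntegral_of_tail_le (a := a) (hf x) hε
    (hUtail.mono fun R' hR' => hR' x hx)).tendsto_limUnder
  rw [dist_eq_norm]
  exact (norm_sub_intervalIntegral_le_of_tail_le (hf x) hlim (hR x hx)).trans_lt hεR

theorem tendstoUniformly_div_atTop {α : Type*} {g : ℝ → α → ℝ} {c : ℝ → ℝ}
    (hg : ∀ R x, |g R x| ≤ 1) (hc : Tendsto c atTop atTop) :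
    TendstoUniformly (fun R x => g R x / c R) 0 atTop := by
  refine Metric.tendstoUniformly_iff.2 fun ε hε => ?_
  filter_upwards [hc.eventually_gt_atTop ε⁻¹] with R hR x
  have hc0 : 0 < c R := (inv_pos.2 hε).trans hR
  rw [Pi.zero_apply, dist_zero_left, Real.norm_eq_abs, abs_div, abs_of_pos hc0,
    div_lt_iff₀ hc0]
  calc |g R x| ≤ 1 := hg R x
    _ < ε * c R := by rwa [← inv_mul_lt_iff₀ hε, mul_one]

noncomputable abbrev airyPhase (x t : ℝ) : ℝ := t ^ 3 / 3 + x * t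

theorem hasDerivAt_airyPhase_right (x t : ℝ) : HasDerivAt (airyPhase x) (t ^ 2 + x) t := by
  have := ((hasDerivAt_pow 3 t).div_const 3).add ((hasDerivAt_id t).const_mul x)
  exact this.congr_deriv (by norm_num)

theorem hasDerivAt_airyPhase_left (x t : ℝ) : HasDerivAt (airyPhase · t) t x := by
  simpa using (hasDerivAt_mul_const t).const_add (t ^ 3 / 3)

theorem hasDerivAt_integral_cos_airyPhase (a b x : ℝ) :
    HasDerivAt (fun x => ∫ t in a..b, cos (airyPhase x t))
      (-∫ t in a..b, t * sin (airyPhase x t)) x := by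
  rw [← intervalIntegral.integral_neg]
  exact hasDerivAt_intervalIntegral_of_continuous_deriv
    (F' := fun x t => -(t * sin (airyPhase x t))) a b x (fun _ => by fun_prop) (by fun_prop)
    fun x t => (hasDerivAt_airyPhase_left x t).cos.congr_deriv (by ring)

theorem hasDerivAt_integral_mul_sin_airyPhase (a b x : ℝ) :
    HasDerivAt (fun x => ∫ t in a..b, t * sin (airyPhase x t))
      (∫ t in a..b, t ^ 2 * cos (airyPhase x t)) x :=
  hasDerivAt_intervalIntegral_of_continuous_deriv (F' := fun x t => t ^ 2 * cos (airyPhase x t))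
    a b x (fun _ => by fun_prop) (by fun_prop)
    fun x t => ((hasDerivAt_airyPhase_left x t).sin.const_mul t).congr_deriv (by ring)

theorem integral_sq_mul_cos_airyPhase (x R : ℝ) :
    ∫ t in (0 : ℝ)..R, t ^ 2 * cos (airyPhase x t)
      = sin (airyPhase x R) - x * ∫ t in (0 : ℝ)..R, cos (airyPhase x t) := by
  have hftc : ∫ t in (0 : ℝ)..R, cos (airyPhase x t) * (t ^ 2 + x) = sin (airyPhase x R) := by
    rw [integral_eq_sub_of_hasDerivAt (fun t _ => (hasDerivAt_airyPhase_right x t).sin)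
      (Continuous.intervalIntegrable (by fun_prop) _ _)]
    simp [airyPhase]
  rw [← hftc, ← intervalIntegral.integral_const_mul, ← integral_sub
    (Continuous.intervalIntegrable (by fun_prop) _ _)
    (Continuous.intervalIntegrable (by fun_prop) _ _)]
  exact integral_congr fun t _ => by ring

theorem hasDerivAt_integral_cos_airyPhase_sub {R : ℝ} (hR : R ≠ 0) (x : ℝ) :
    HasDerivAt (fun x => (∫ t in (0 : ℝ)..R, cos (airyPhase x t)) - sin (airyPhase x R) / R ^ 2)
      (-((∫ t in (0 : ℝ)..R, t * sin (airyPhase x t)) + cos (airyPhase x R) / R)) x := by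
  refine ((hasDerivAt_integral_cos_airyPhase 0 R x).sub
    ((hasDerivAt_airyPhase_left x R).sin.div_const (R ^ 2))).congr_deriv ?_
  field_simp
  ring

theorem hasDerivAt_integral_mul_sin_airyPhase_add {R : ℝ} (hR : R ≠ 0) (x : ℝ) :
    HasDerivAt (fun x => (∫ t in (0 : ℝ)..R, t * sin (airyPhase x t)) + cos (airyPhase x R) / R)
      (-(x * ∫ t in (0 : ℝ)..R, cos (airyPhase x t))) x := by
  refine ((hasDerivAt_integral_mul_sin_airyPhase 0 R x).add
    ((hasDerivAt_airyPhase_left x R).cos.div_const R)).congr_deriv ?_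
  rw [integral_sq_mul_cos_airyPhase]
  field_simp
  ring

theorem half_sq_le_sq_add {R t x : ℝ} (hR : 0 ≤ R) (hRt : R ≤ t) (hx : |x| ≤ R ^ 2 / 2) :
    R ^ 2 / 2 ≤ t ^ 2 + x := by
  nlinarith [neg_abs_le x]

theorem abs_integral_cos_airyPhase_le {x R S : ℝ} (hR : 0 < R) (hRS : R ≤ S)
    (hx : |x| ≤ R ^ 2 / 2) : |∫ t in R..S, cos (airyPhase x t)| ≤ 4 / R ^ 2 := by
  have hden : ∀ t ∈ Icc R S, R ^ 2 / 2 ≤ t ^ 2 + x := fun t ht => half_sq_le_sq_add hR.le ht.1 hx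
  have hpos : ∀ t ∈ Icc R S, 0 < t ^ 2 + x := fun t ht => by nlinarith [hden t ht]
  have hne : ∀ t ∈ Icc R S, t ^ 2 + x ≠ 0 := fun t ht => (hpos t ht).ne'
  have hu : ∀ t ∈ Icc R S, HasDerivAt (fun t => (t ^ 2 + x)⁻¹) (-(2 * t) / (t ^ 2 + x) ^ 2) t :=
    fun t ht => (((hasDerivAt_pow 2 t).add_const x).inv (hne t ht)).congr_deriv (by norm_num)
  have hv : ∀ t, HasDerivAt (fun t => sin (airyPhase x t)) (cos (airyPhase x t) * (t ^ 2 + x)) t :=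
    fun t => (hasDerivAt_airyPhase_right x t).sin
  have heq : ∫ t in R..S, cos (airyPhase x t)
      = ∫ t in R..S, (t ^ 2 + x)⁻¹ * (cos (airyPhase x t) * (t ^ 2 + x)) := by
    refine integral_congr fun t ht => ?_
    rw [uIcc_of_le hRS] at ht
    field_simp [hne t ht]
  rw [heq]
  refine (abs_integral_mul_deriv_le_of_antitone hRS hu (fun t _ => hv t) ?_
    (Continuous.intervalIntegrable (by fun_prop) _ _) (fun t ht => ?_)
    (inv_nonneg.2 (hpos S ⟨hRS, le_rfl⟩).le)
    fun t _ => abs_sin_le_one _).trans ?_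
  · refine ContinuousOn.intervalIntegrable ?_
    rw [uIcc_of_le hRS]
    exact ContinuousOn.div (by fun_prop) (by fun_prop) fun t ht => pow_ne_zero 2 (hne t ht)
  · have : 0 ≤ t := hR.le.trans ht.1
    exact div_nonpos_of_nonpos_of_nonneg (by linarith) (sq_nonneg _)
  · have hRR := hden R ⟨le_rfl, hRS⟩
    calc 2 * (R ^ 2 + x)⁻¹ ≤ 2 * (R ^ 2 / 2)⁻¹ := by gcongr
      _ = 4 / R ^ 2 := by field_simp; norm_num

theorem abs_integral_mul_sin_airyPhase_le {x R S : ℝ} (hR : 0 < R) (hRS : R ≤ S)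
    (hx : |x| ≤ R ^ 2 / 2) : |∫ t in R..S, t * sin (airyPhase x t)| ≤ 4 / R := by
  have hden : ∀ t ∈ Icc R S, R ^ 2 / 2 ≤ t ^ 2 + x := fun t ht => half_sq_le_sq_add hR.le ht.1 hx
  have hpos : ∀ t ∈ Icc R S, 0 < t ^ 2 + x := fun t ht => by nlinarith [hden t ht]
  have hne : ∀ t ∈ Icc R S, t ^ 2 + x ≠ 0 := fun t ht => (hpos t ht).ne'
  have hu : ∀ t ∈ Icc R S,
      HasDerivAt (fun t => t / (t ^ 2 + x)) ((x - t ^ 2) / (t ^ 2 + x) ^ 2) t := fun t ht =>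
    ((hasDerivAt_id t).div ((hasDerivAt_pow 2 t).add_const x) (hne t ht)).congr_deriv
      (by simp only [id]; ring)
  have hv : ∀ t, HasDerivAt (fun t => -cos (airyPhase x t)) (sin (airyPhase x t) * (t ^ 2 + x)) t :=
    fun t => (hasDerivAt_airyPhase_right x t).cos.neg.congr_deriv (by ring)
  have heq : ∫ t in R..S, t * sin (airyPhase x t)
      = ∫ t in R..S, t / (t ^ 2 + x) * (sin (airyPhase x t) * (t ^ 2 + x)) := by
    refine integral_congr fun t ht => ?_
    rw [uIcc_of_le hRS] at ht
    field_simp [hne t ht]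
  rw [heq]
  refine (abs_integral_mul_deriv_le_of_antitone hRS hu (fun t _ => hv t) ?_
    (Continuous.intervalIntegrable (by fun_prop) _ _) (fun t ht => ?_)
    (div_nonneg (hR.le.trans hRS) (hpos S ⟨hRS, le_rfl⟩).le)
    fun t _ => by rw [abs_neg]; exact abs_cos_le_one _).trans ?_
  · refine ContinuousOn.intervalIntegrable ?_
    rw [uIcc_of_le hRS]
    exact ContinuousOn.div (by fun_prop) (by fun_prop) fun t ht => pow_ne_zero 2 (hne t ht)
  · have : R ^ 2 ≤ t ^ 2 := pow_le_pow_left₀ hR.le ht.1 2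
    exact div_nonpos_of_nonpos_of_nonneg (by linarith [le_abs_self x, sq_nonneg R]) (sq_nonneg _)
  · have hRR := hden R ⟨le_rfl, hRS⟩
    calc 2 * (R / (R ^ 2 + x)) ≤ 2 * (R / (R ^ 2 / 2)) := by gcongr
      _ = 4 / R := by field_simp; ring

theorem exists_nhds_eventually_abs_le_sq_div_two (x₀ : ℝ) :
    ∃ U ∈ 𝓝 x₀, ∀ᶠ R in atTop, 0 < R ∧ ∀ x ∈ U, |x| ≤ R ^ 2 / 2 := by
  refine ⟨Ioo (-(|x₀| + 1)) (|x₀| + 1), Ioo_mem_nhds (by linarith [neg_abs_le x₀])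
    (by linarith [le_abs_self x₀]), ?_⟩
  filter_upwards [eventually_gt_atTop 0,
    (tendsto_pow_atTop two_ne_zero).eventually_ge_atTop (2 * (|x₀| + 1))] with R hR hR2
  exact ⟨hR, fun x hx => by linarith [(abs_lt.2 hx).le]⟩

theorem tendstoLocallyUniformly_integral_cos_airyPhase :
    TendstoLocallyUniformly (fun R x => ∫ t in (0 : ℝ)..R, cos (airyPhase x t))
      (fun x => limUnder atTop fun R => ∫ t in (0 : ℝ)..R, cos (airyPhase x t)) atTop := by
  refine tendstoLocallyUniformly_intervalIntegral_of_tail_le 0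
    (fun x _ _ => Continuous.intervalIntegrable (by fun_prop) _ _)
    (ε := fun R => 4 / R ^ 2) (tendsto_const_nhds.div_atTop (tendsto_pow_atTop two_ne_zero))
    fun x₀ => ?_
  obtain ⟨U, hU, hR⟩ := exists_nhds_eventually_abs_le_sq_div_two x₀
  exact ⟨U, hU, hR.mono fun R hR x hx S hS =>
    (Real.norm_eq_abs _).trans_le (abs_integral_cos_airyPhase_le hR.1 hS (hR.2 x hx))⟩

theorem tendstoLocallyUniformly_integral_mul_sin_airyPhase :
    TendstoLocallyUniformly (fun R x => ∫ t in (0 : ℝ)..R, t * sin (airyPhase x t))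
      (fun x => limUnder atTop fun R => ∫ t in (0 : ℝ)..R, t * sin (airyPhase x t)) atTop := by
  refine tendstoLocallyUniformly_intervalIntegral_of_tail_le 0
    (fun x _ _ => Continuous.intervalIntegrable (by fun_prop) _ _)
    (ε := fun R => 4 / R) (tendsto_const_nhds.div_atTop tendsto_id) fun x₀ => ?_
  obtain ⟨U, hU, hR⟩ := exists_nhds_eventually_abs_le_sq_div_two x₀
  exact ⟨U, hU, hR.mono fun R hR x hx S hS =>
    (Real.norm_eq_abs _).trans_le (abs_integral_mul_sin_airyPhase_le hR.1 hS (hR.2 x hx))⟩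

theorem deriv_deriv_eq_mul_of_tendsto_integral_cos_airyPhase {f : ℝ → ℝ}
    (hf : ∀ x, Tendsto (fun R => ∫ t in (0 : ℝ)..R, cos (airyPhase x t)) atTop (𝓝 (f x)))
    (x : ℝ) : deriv (deriv f) x = x * f x := by
  set g := fun x => limUnder atTop fun R => ∫ t in (0 : ℝ)..R, t * sin (airyPhase x t)
  have hC : TendstoLocallyUniformlyOn (fun R x => ∫ t in (0 : ℝ)..R, cos (airyPhase x t)) f
      atTop univ := tendstoLocallyUniformlyOn_univ.2 <|
    tendstoLocallyUniformly_integral_cos_airyPhase.congr_right fun x => (hf x).limUnder_eq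
  have hS := tendstoLocallyUniformlyOn_univ.2 tendstoLocallyUniformly_integral_mul_sin_airyPhase
  have hsin := tendstoUniformly_div_atTop (g := fun R x => sin (airyPhase x R))
    (fun _ _ => abs_sin_le_one _) (tendsto_pow_atTop two_ne_zero)
  have hcos := tendstoLocallyUniformlyOn_univ.2 <| TendstoUniformly.tendstoLocallyUniformly <|
    tendstoUniformly_div_atTop (g := fun R x => cos (airyPhase x R))
      (fun _ _ => abs_cos_le_one _) tendsto_id
  have hR : ∀ᶠ R : ℝ in atTop, R ≠ 0 := eventually_ne_atTop 0
  have hf' : ∀ x, HasDerivAt f (-g x) x := fun x =>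
    hasDerivAt_of_tendstoLocallyUniformlyOn isOpen_univ
      (by simpa using (hS.fun_add hcos).fun_neg)
      (hR.mono fun R hR x _ => hasDerivAt_integral_cos_airyPhase_sub hR x)
      (fun x hx => by simpa using (hC.tendsto_at hx).sub (hsin.tendsto_at x)) (mem_univ x)
  have hf_cont : ContinuousOn f univ := fun x _ => (hf' x).continuousAt.continuousWithinAt
  have hid : TendstoLocallyUniformlyOn (fun (_ : ℝ) (x : ℝ) => x) id atTop univ :=
    tendstoLocallyUniformlyOn_iff_forall_tendsto.2 fun _ _ => tendsto_diag_uniformity _ _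
  have hg' : HasDerivAt g (-(x * f x)) x :=
    hasDerivAt_of_tendstoLocallyUniformlyOn isOpen_univ
      (hid.fun_mul₀ hC continuousOn_id hf_cont).fun_neg
      (hR.mono fun R hR x _ => hasDerivAt_integral_mul_sin_airyPhase_add hR x)
      (fun x hx => by simpa using (hS.tendsto_at hx).add (hcos.tendsto_at hx)) (mem_univ x)
  rw [show deriv f = fun x => -g x from funext fun x => (hf' x).deriv, hg'.fun_neg.deriv, neg_neg]

/-- The Airy function `Ai(x) = (1/π) ∫₀^∞ cos(t³/3 + xt) dt` (improper
Riemann integral) satisfies the Airy differential equation `Ai''(x) = x Ai(x)`. -/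
theorem airy_ode (Ai : ℝ → ℝ)
    (hAi : ∀ x : ℝ,
      Tendsto (fun R : ℝ => (1 / π) * ∫ t in (0:ℝ)..R, Real.cos (t ^ 3 / 3 + x * t))
        atTop (nhds (Ai x))) :
    ∀ x : ℝ, deriv (deriv Ai) x = x * Ai x := by
  intro x
  have hπAi : ∀ x, Tendsto (fun R => ∫ t in (0 : ℝ)..R, cos (airyPhase x t)) atTop (𝓝 (π * Ai x)) :=
    fun x => by simpa [← mul_assoc, pi_ne_zero] using (hAi x).const_mul π
  have := deriv_deriv_eq_mul_of_tendsto_integral_cos_airyPhase hπAi x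
  simp only [deriv_const_mul_field'] at this
  exact mul_left_cancel₀ pi_ne_zero (by linarith)
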